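/- Let (Ω,𝓕) be a measurable space, μ̄ a probability measure on (Ω,𝓕), ν_1,…,ν_{m'} probability measures on (Ω,𝓕), and b_1,…,b_{m'} ≥ 0 with Σ_j b_j = 1. For each ℓ let ν_ℓ = λ_ℓ + ρ_ℓ be the Lebesgue decomposition of ν_ℓ with respect to μ̄, i.e. λ_ℓ ⊥ μ̄ and ρ_ℓ ≪ μ̄. Then for each ℓ, b_ℓ · λ_ℓ(Ω) ≤ ‖μ̄ − Σ_{j=1}^{m'} b_j ν_j‖, where ‖·‖ denotes the total variation norm on finite signed measures. In particular, if 𝒫_i = Σ_{j} b_j δ_{ν_{i,j}} is a sequence with ‖μ̄ − Σ_j b_j ν_{i,j}‖ → 0 and b_ℓ > 0, then the singular parts λ_{i,ℓ} of ν_{i,ℓ} with respect to μ̄ satisfy ‖λ_{i,ℓ}‖ → 0. -/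

import Mathlib

/-! A measure singular to `μ̄` lives on a `μ̄`-null set, where subtracting `μ̄` changes nothing;
so a singular part of a mixture component, scaled by its weight, stays below
`Σ_j b_j ν_j - μ̄`, whose total mass is part of the total variation distance. -/

open MeasureTheory Filter
open scoped ENNReal

noncomputable section

/-- The total variation norm `‖μ - ν‖` of the difference of two (finite) measures. -/
def tvDist {Ω : Type*} [MeasurableSpace Ω] (μ ν : Measure Ω) : ℝ≥0∞ :=
  (μ - ν) Set.univ + (ν - μ) Set.univ

namespace MeasureTheory

variable {Ω : Type*} [MeasurableSpace Ω]

theorem Measure.MutuallySingular.le_sub_of_le {lam ν μ : Measure Ω} (hsing : lam ⟂ₘ μ)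
    (hle : lam ≤ ν) : lam ≤ ν - μ := by
  have hlam : lam.restrict hsing.nullSetᶜ = lam := Measure.restrict_eq_self_of_ae_mem <|
    mem_ae_iff.mpr <| by simpa only [Set.ofPred_mem_eq, compl_compl] using hsing.measure_nullSet
  calc lam = lam.restrict hsing.nullSetᶜ := hlam.symm
    _ ≤ ν.restrict hsing.nullSetᶜ := Measure.restrict_mono le_rfl hle
    _ = ν.restrict hsing.nullSetᶜ - μ.restrict hsing.nullSetᶜ := by
        rw [hsing.restrict_compl_nullSet, Measure.sub_zero]
    _ = (ν - μ).restrict hsing.nullSetᶜ :=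
        (Measure.restrict_sub_eq_restrict_sub_restrict hsing.measurableSet_nullSet.compl).symm
    _ ≤ ν - μ := Measure.restrict_le_self

theorem sub_apply_univ_le_tvDist (μ ν : Measure Ω) : (ν - μ) Set.univ ≤ tvDist μ ν :=
  le_add_self

theorem Measure.MutuallySingular.mul_apply_univ_le_tvDist_sum {ι : Type*} {s : Finset ι}
    {w : ι → ℝ≥0∞} {ν : ι → Measure Ω} {lam μ : Measure Ω} {l : ι} (hsing : lam ⟂ₘ μ)
    (hl : l ∈ s) (hle : lam ≤ ν l) : w l * lam Set.univ ≤ tvDist μ (∑ j ∈ s, w j • ν j) := by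
  have hle_sum : w l • lam ≤ ∑ j ∈ s, w j • ν j :=
    calc w l • lam ≤ w l • ν l := by gcongr
      _ ≤ ∑ j ∈ s, w j • ν j := Finset.single_le_sum (fun j _ => Measure.zero_le _) hl
  calc w l * lam Set.univ = (w l • lam) Set.univ := rfl
    _ ≤ ((∑ j ∈ s, w j • ν j) - μ) Set.univ := (hsing.smul _).le_sub_of_le hle_sum Set.univ
    _ ≤ tvDist μ (∑ j ∈ s, w j • ν j) := sub_apply_univ_le_tvDist _ _

end MeasureTheory

theorem ENNReal.tendsto_nhds_zero_of_const_mul_le {ι : Type*} {l : Filter ι} {c : ℝ≥0∞}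
    {f g : ι → ℝ≥0∞} (hc₀ : c ≠ 0) (hc : c ≠ ∞) (hfg : ∀ i, c * f i ≤ g i)
    (hg : Tendsto g l (nhds 0)) : Tendsto f l (nhds 0) := by
  have hinv : Tendsto (fun i => c⁻¹ * g i) l (nhds 0) := by
    simpa using ENNReal.Tendsto.const_mul hg (Or.inr (ENNReal.inv_ne_top.mpr hc₀))
  exact tendsto_of_tendsto_of_tendsto_of_le_of_le tendsto_const_nhds hinv (fun _ => zero_le)
    fun i => (ENNReal.mul_le_iff_le_inv hc₀ hc).mp (hfg i)

theorem singular_part_le_tvDist_general {Ω : Type*} [MeasurableSpace Ω]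
    (μbar : Measure Ω) {m' : ℕ}
    (b : Fin m' → ℝ) :
    (∀ (ν lam rho : Fin m' → Measure Ω),
      (∀ j, IsProbabilityMeasure (ν j)) →
      (∀ l, ν l = lam l + rho l ∧ (lam l).MutuallySingular μbar ∧ rho l ≪ μbar) →
      ∀ l : Fin m',
        ENNReal.ofReal (b l) * lam l Set.univ ≤
          tvDist μbar (∑ j, ENNReal.ofReal (b j) • ν j)) ∧
    (∀ (ν lam rho : ℕ → Fin m' → Measure Ω),
      (∀ i j, IsProbabilityMeasure (ν i j)) →
      (∀ i l, ν i l = lam i l + rho i l ∧ (lam i l).MutuallySingular μbar ∧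
        rho i l ≪ μbar) →
      Filter.Tendsto (fun i : ℕ => tvDist μbar (∑ j, ENNReal.ofReal (b j) • ν i j))
        Filter.atTop (nhds 0) →
      ∀ l : Fin m', 0 < b l →
        Filter.Tendsto (fun i : ℕ => lam i l Set.univ) Filter.atTop (nhds 0)) := by
  have singular_bound : ∀ (ν lam rho : Fin m' → Measure Ω),
      (∀ l, ν l = lam l + rho l ∧ (lam l).MutuallySingular μbar ∧ rho l ≪ μbar) →
      ∀ l, ENNReal.ofReal (b l) * lam l Set.univ ≤
        tvDist μbar (∑ j, ENNReal.ofReal (b j) • ν j) := fun ν lam rho hdec l =>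
    (hdec l).2.1.mul_apply_univ_le_tvDist_sum (w := fun j => ENNReal.ofReal (b j)) (ν := ν)
      (Finset.mem_univ l) (by rw [(hdec l).1]; exact Measure.le_add_right le_rfl)
  refine ⟨fun ν lam rho _ hdec => singular_bound ν lam rho hdec, fun ν lam rho _ hdec htv l hbl => ?_⟩
  exact ENNReal.tendsto_nhds_zero_of_const_mul_le (ENNReal.ofReal_pos.mpr hbl).ne'
    ENNReal.ofReal_ne_top (fun i => singular_bound (ν i) (lam i) (rho i) (hdec i) l) htv

/-- the singular parts of mixture components are controlled by the total
variation distance of the mixture to `μ̄`: `b_ℓ · λ_ℓ(Ω) ≤ ‖μ̄ − Σ_j b_j ν_j‖`; in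
particular, if `‖μ̄ − Σ_j b_j ν_{i,j}‖ → 0` and `b_ℓ > 0`, then `‖λ_{i,ℓ}‖ → 0`. -/
theorem singular_part_le_tvDist {Ω : Type*} [MeasurableSpace Ω]
    (μbar : Measure Ω) [IsProbabilityMeasure μbar] {m' : ℕ}
    (b : Fin m' → ℝ) (hb0 : ∀ j, 0 ≤ b j) (hb1 : ∑ j, b j = 1) :
    (∀ (ν lam rho : Fin m' → Measure Ω),
      (∀ j, IsProbabilityMeasure (ν j)) →
      (∀ l, ν l = lam l + rho l ∧ (lam l).MutuallySingular μbar ∧ rho l ≪ μbar) →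
      ∀ l : Fin m',
        ENNReal.ofReal (b l) * lam l Set.univ ≤
          tvDist μbar (∑ j, ENNReal.ofReal (b j) • ν j)) ∧
    (∀ (ν lam rho : ℕ → Fin m' → Measure Ω),
      (∀ i j, IsProbabilityMeasure (ν i j)) →
      (∀ i l, ν i l = lam i l + rho i l ∧ (lam i l).MutuallySingular μbar ∧
        rho i l ≪ μbar) →
      Filter.Tendsto (fun i : ℕ => tvDist μbar (∑ j, ENNReal.ofReal (b j) • ν i j))
        Filter.atTop (nhds 0) →
      ∀ l : Fin m', 0 < b l →
        Filter.Tendsto (fun i : ℕ => lam i l Set.univ) Filter.atTop (nhds 0)) :=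
  singular_part_le_tvDist_general μbar b
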